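/- arXiv:2405.04117 — 7 statements merged into one kernel-verified Lean document; each statement's English description precedes it below -/
import Mathlib

section
/- Let G₁ and G₂ be nut graphs with distinguished vertices v₁ ∈ V(G₁) and v₂ ∈ V(G₂). Then the coalescence of (G₁, v₁) and (G₂, v₂) is a nut graph. -/
open scoped Classical

/-- A *nut graph*: a finite simple graph on at least 2 vertices whose real adjacency
matrix has nullity (kernel dimension) exactly 1 and such that every nonzero vector in
the kernel of the adjacency matrix has all entries nonzero. -/
def SimpleGraph.IsNut {V : Type*} [Fintype V] (G : SimpleGraph V) : Prop :=
  2 ≤ Fintype.card V ∧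
  Module.finrank ℝ (LinearMap.ker (Matrix.mulVecLin (G.adjMatrix ℝ))) = 1 ∧
  ∀ x : V → ℝ, Matrix.mulVecLin (G.adjMatrix ℝ) x = 0 → x ≠ 0 → ∀ v : V, x v ≠ 0

/-- The automorphism group of a simple graph, realised as the subgroup of the
permutations of the vertex set that preserve adjacency (and non-adjacency). -/
def SimpleGraph.autGroup {V : Type*} (G : SimpleGraph V) : Subgroup (Equiv.Perm V) where
  carrier := { σ | ∀ u v : V, G.Adj (σ u) (σ v) ↔ G.Adj u v }
  mul_mem' := by
    intro σ τ hσ hτ u v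
    simpa [hσ (τ u) (τ v)] using hτ u v
  one_mem' := by intro u v; rfl
  inv_mem' := by
    intro σ hσ u v
    have := hσ (σ⁻¹ u) (σ⁻¹ v)
    simpa using this.symm

/-- The coalescence of rooted graphs `(G₁, v₁)` and `(G₂, v₂)`: the disjoint union of
`G₁` and `G₂` with the roots `v₁` and `v₂` identified.  Its vertex set is
`V₁ ⊕ {w : V₂ // w ≠ v₂}`, with `v₁` playing the role of the identified root. -/
def SimpleGraph.coalescence {V₁ V₂ : Type*} (G₁ : SimpleGraph V₁) (G₂ : SimpleGraph V₂)
    (v₁ : V₁) (v₂ : V₂) : SimpleGraph (V₁ ⊕ {w : V₂ // w ≠ v₂}) where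
  Adj x y :=
    match x, y with
    | Sum.inl a, Sum.inl b => G₁.Adj a b
    | Sum.inl a, Sum.inr b => a = v₁ ∧ G₂.Adj v₂ b.1
    | Sum.inr a, Sum.inl b => b = v₁ ∧ G₂.Adj v₂ a.1
    | Sum.inr a, Sum.inr b => G₂.Adj a.1 b.1
  symm := ⟨by
    rintro (a | a) (b | b) h
    · exact G₁.adj_symm h
    · exact h
    · exact h
    · exact G₂.adj_symm h⟩
  loopless := ⟨by
    rintro (a | a) h
    · exact G₁.irrefl h
    · exact G₂.irrefl h⟩

/-!
A kernel vector `x` of the coalescence restricts to vectors `x₁` on `G₁` and `x₂` on `G₂` with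
the same root value, and `A(G₁) x₁ = -s e_{v₁}`, `A(G₂) x₂ = s e_{v₂}` for a scalar `s`. Pairing
the first equation with the nowhere-zero kernel vector of `G₁` gives `s = 0`, so `x₁` and `x₂` are
kernel vectors of nut graphs, hence each zero or nowhere zero; as they share the root value, a
kernel vector of the coalescence vanishing at one vertex vanishes everywhere. Gluing suitably
rescaled kernel vectors of `G₁` and `G₂` gives a nonzero one, so the nullity is exactly one.
-/

open Matrix

theorem Matrix.IsSymm.mulVec_apply_eq_zero_of_forall_ne {n R : Type*} [Fintype n]
    [CommSemiring R] [NoZeroDivisors R] {M : Matrix n n R} (hM : M.IsSymm) {c x : n → R}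
    (hc : M *ᵥ c = 0) {v : n} (hcv : c v ≠ 0) (hx : ∀ u ≠ v, (M *ᵥ x) u = 0) :
    (M *ᵥ x) v = 0 := by
  have hdot : c ⬝ᵥ (M *ᵥ x) = 0 := by
    rw [dotProduct_mulVec, ← hM.eq, vecMul_transpose, hc, zero_dotProduct]
  have hsingle : c ⬝ᵥ (M *ᵥ x) = c v * (M *ᵥ x) v :=
    Finset.sum_eq_single v (fun u _ hu => by rw [hx u hu, mul_zero]) (by simp)
  exact (mul_eq_zero.mp (hsingle ▸ hdot)).resolve_left hcv

namespace SimpleGraph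

theorem adjMatrix_mulVec_apply_eq_sum_ite {V R : Type*} [Fintype V] [NonAssocSemiring R]
    (G : SimpleGraph V) (x : V → R) (v : V) :
    (G.adjMatrix R *ᵥ x) v = ∑ u, if G.Adj v u then x u else 0 := by
  simp [mulVec, dotProduct, adjMatrix_apply, ite_mul]

/-- Evaluation at a vertex embeds the kernel into `ℝ`, so the nullity is at most one. -/
theorem isNut_iff {V : Type*} [Fintype V] (G : SimpleGraph V) :
    G.IsNut ↔ 2 ≤ Fintype.card V ∧ (∃ x, G.adjMatrix ℝ *ᵥ x = 0 ∧ x ≠ 0) ∧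
      ∀ x, G.adjMatrix ℝ *ᵥ x = 0 → ∀ v, x v = 0 → x = 0 := by
  set K := LinearMap.ker (G.adjMatrix ℝ).mulVecLin
  constructor
  · rintro ⟨hcard, hrank, hfull⟩
    obtain ⟨x, hx, hx0⟩ := Submodule.exists_mem_ne_zero_of_ne_bot
      (Submodule.one_le_finrank_iff.mp hrank.ge)
    exact ⟨hcard, ⟨x, hx, hx0⟩, fun x hx v hxv => by_contra fun h => hfull x hx h v hxv⟩
  · rintro ⟨hcard, ⟨y, hy, hy0⟩, hvanish⟩
    refine ⟨hcard, le_antisymm ?_ ?_, fun x hx h v hxv => h (hvanish x hx v hxv)⟩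
    · obtain ⟨v⟩ : Nonempty V := Fintype.card_pos_iff.mp (by omega)
      have heval : Function.Injective ((LinearMap.proj v).comp K.subtype) := by
        refine (injective_iff_map_eq_zero _).mpr fun x hx => Subtype.ext ?_
        exact hvanish x x.2 v hx
      simpa using LinearMap.finrank_le_finrank_of_injective heval
    · exact Submodule.one_le_finrank_iff.mpr fun h => hy0 ((Submodule.eq_bot_iff K).mp h y hy)

section Coalescence

variable {V₁ V₂ R : Type*} (G₁ : SimpleGraph V₁) (G₂ : SimpleGraph V₂) {v₁ : V₁} {v₂ : V₂}

@[simp]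
theorem coalescence_adj_inl_inl {a b : V₁} :
    (G₁.coalescence G₂ v₁ v₂).Adj (.inl a) (.inl b) ↔ G₁.Adj a b := Iff.rfl

@[simp]
theorem coalescence_adj_inl_inr {a : V₁} {w : {w : V₂ // w ≠ v₂}} :
    (G₁.coalescence G₂ v₁ v₂).Adj (.inl a) (.inr w) ↔ a = v₁ ∧ G₂.Adj v₂ w := Iff.rfl

@[simp]
theorem coalescence_adj_inr_inl {w : {w : V₂ // w ≠ v₂}} {a : V₁} :
    (G₁.coalescence G₂ v₁ v₂).Adj (.inr w) (.inl a) ↔ a = v₁ ∧ G₂.Adj v₂ w := Iff.rfl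

@[simp]
theorem coalescence_adj_inr_inr {w w' : {w : V₂ // w ≠ v₂}} :
    (G₁.coalescence G₂ v₁ v₂).Adj (.inr w) (.inr w') ↔ G₂.Adj w w' := Iff.rfl

/-- The root `v₂` takes the value at `v₁`, the vertex it is identified with. -/
noncomputable def coalescenceRight (v₁ : V₁) (v₂ : V₂) (x : V₁ ⊕ {w : V₂ // w ≠ v₂} → R) :
    V₂ → R :=
  fun u => if h : u = v₂ then x (.inl v₁) else x (.inr ⟨u, h⟩)

@[simp]
theorem coalescenceRight_root (x : V₁ ⊕ {w : V₂ // w ≠ v₂} → R) :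
    coalescenceRight v₁ v₂ x v₂ = x (.inl v₁) := dif_pos rfl

@[simp]
theorem coalescenceRight_coe (x : V₁ ⊕ {w : V₂ // w ≠ v₂} → R) (w : {w : V₂ // w ≠ v₂}) :
    coalescenceRight v₁ v₂ x w = x (.inr w) := dif_neg w.2

theorem coalescenceRight_sumElim {y₁ : V₁ → R} {y₂ : V₂ → R} (h : y₁ v₁ = y₂ v₂) :
    coalescenceRight v₁ v₂ (Sum.elim y₁ (y₂ ∘ Subtype.val)) = y₂ := by
  funext u
  by_cases hu : u = v₂
  · subst hu; simpa using h
  · exact coalescenceRight_coe _ ⟨u, hu⟩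

variable [Fintype V₁] [Fintype V₂]

theorem coalescence_mulVec_inl [NonAssocSemiring R] (x : V₁ ⊕ {w : V₂ // w ≠ v₂} → R) (a : V₁) :
    ((G₁.coalescence G₂ v₁ v₂).adjMatrix R *ᵥ x) (.inl a) =
      (G₁.adjMatrix R *ᵥ (x ∘ .inl)) a +
        if a = v₁ then (G₂.adjMatrix R *ᵥ coalescenceRight v₁ v₂ x) v₂ else 0 := by
  simp only [adjMatrix_mulVec_apply_eq_sum_ite, Fintype.sum_sum_type,
    Fintype.sum_eq_add_sum_subtype_ne _ v₂, G₂.irrefl, coalescenceRight_coe,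
    coalescence_adj_inl_inl, coalescence_adj_inl_inr]
  by_cases ha : a = v₁ <;> simp [ha]

theorem coalescence_mulVec_inr [NonAssocSemiring R] (x : V₁ ⊕ {w : V₂ // w ≠ v₂} → R)
    (w : {w : V₂ // w ≠ v₂}) :
    ((G₁.coalescence G₂ v₁ v₂).adjMatrix R *ᵥ x) (.inr w) =
      (G₂.adjMatrix R *ᵥ coalescenceRight v₁ v₂ x) w := by
  simp only [adjMatrix_mulVec_apply_eq_sum_ite, Fintype.sum_sum_type,
    Fintype.sum_eq_add_sum_subtype_ne _ v₂, coalescenceRight_coe, coalescenceRight_root,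
    coalescence_adj_inr_inl, coalescence_adj_inr_inr, ite_and, Finset.sum_ite_eq',
    Finset.mem_univ, if_true, G₂.adj_comm v₂]

/-- `c` is orthogonal to the image of the symmetric matrix `A(G₁)`, which forces the cross term
at the root to vanish. -/
theorem coalescence_mulVec_eq_zero_iff [CommSemiring R] [NoZeroDivisors R] {c : V₁ → R}
    (hc : G₁.adjMatrix R *ᵥ c = 0) (hcv : c v₁ ≠ 0) {x : V₁ ⊕ {w : V₂ // w ≠ v₂} → R} :
    (G₁.coalescence G₂ v₁ v₂).adjMatrix R *ᵥ x = 0 ↔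
      G₁.adjMatrix R *ᵥ (x ∘ .inl) = 0 ∧ G₂.adjMatrix R *ᵥ coalescenceRight v₁ v₂ x = 0 := by
  constructor
  · intro hx
    have hinl a := (coalescence_mulVec_inl G₁ G₂ x a).symm.trans (congrFun hx (.inl a))
    have hinr w := (coalescence_mulVec_inr G₁ G₂ x w).symm.trans (congrFun hx (.inr w))
    have hroot : (G₁.adjMatrix R *ᵥ (x ∘ .inl)) v₁ = 0 :=
      G₁.isSymm_adjMatrix.mulVec_apply_eq_zero_of_forall_ne hc hcv fun a ha => by
        simpa [ha] using hinl a
    constructor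
    · funext a
      by_cases ha : a = v₁
      · subst ha; exact hroot
      · simpa [ha] using hinl a
    · funext u
      by_cases hu : u = v₂
      · subst hu; simpa [hroot] using hinl v₁
      · exact hinr ⟨u, hu⟩
  · rintro ⟨h₁, h₂⟩
    ext (a | w)
    · rw [coalescence_mulVec_inl, h₁, h₂]; simp
    · rw [coalescence_mulVec_inr, h₂]; rfl

end Coalescence

end SimpleGraph

/-- The coalescence of two nut graphs is a nut graph. -/
theorem coalescence_isNut {V₁ V₂ : Type*} [Fintype V₁] [Fintype V₂]
    (G₁ : SimpleGraph V₁) (G₂ : SimpleGraph V₂) (v₁ : V₁) (v₂ : V₂)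
    (h₁ : G₁.IsNut) (h₂ : G₂.IsNut) :
    (G₁.coalescence G₂ v₁ v₂).IsNut := by
  rw [SimpleGraph.isNut_iff] at h₁ h₂ ⊢
  obtain ⟨hcard, ⟨c₁, hc₁, hc₁0⟩, hvanish₁⟩ := h₁
  obtain ⟨-, ⟨c₂, hc₂, hc₂0⟩, hvanish₂⟩ := h₂
  have hc₁v : c₁ v₁ ≠ 0 := fun h => hc₁0 (hvanish₁ c₁ hc₁ v₁ h)
  have hc₂v : c₂ v₂ ≠ 0 := fun h => hc₂0 (hvanish₂ c₂ hc₂ v₂ h)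
  have hker x := G₁.coalescence_mulVec_eq_zero_iff G₂ (v₂ := v₂) hc₁ hc₁v (x := x)
  refine ⟨?_, ⟨Sum.elim (c₂ v₂ • c₁) ((c₁ v₁ • c₂) ∘ Subtype.val), ?_, ?_⟩, ?_⟩
  · rw [Fintype.card_sum]; omega
  · rw [hker, SimpleGraph.coalescenceRight_sumElim (by simp [mul_comm])]
    simp [mulVec_smul, hc₁, hc₂]
  · intro h
    simpa [hc₁v, hc₂v] using congrFun h (.inl v₁)
  · intro x hx p hxp
    obtain ⟨hx₁, hx₂⟩ := (hker x).mp hx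
    have hroot : x (.inl v₁) = 0 := by
      rcases p with a | w
      · exact congrFun (hvanish₁ _ hx₁ a hxp) v₁
      · rw [← SimpleGraph.coalescenceRight_root (v₂ := v₂) x]
        exact congrFun (hvanish₂ _ hx₂ w (by simpa using hxp)) v₂
    have hzero₁ := hvanish₁ _ hx₁ v₁ hroot
    have hzero₂ := hvanish₂ _ hx₂ v₂ (by simpa using hroot)
    ext (a | w)
    · exact congrFun hzero₁ a
    · simpa using congrFun hzero₂ w
end

section
/- Let G be a connected (2t)-regular simple graph, where t ≥ 1. Then the triangle-multiplier graph 𝓜₃(G) is a nut graph. -/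
/-!
In a kernel vector `x` of `𝓜₃(G)`, the equations at the two outer vertices of a triangle at `v`
force both to carry `-x v`. The equation at `v` then says
`∑_{u ~ v} x u = 2t · x v = deg v · x v`, so `x` restricted to `V` lies in the kernel of the
Laplacian of `G` and is constant, `G` being connected. Hence the kernel is spanned by the vector
that is `1` on `V` and `-1` on the triangle vertices; it has no zero entry, and `2t`-regularity
is exactly what puts it in the kernel.
-/

open scoped Classical

/-- The triangle-multiplier graph `𝓜₃(G)`: obtained from `G` by fusing a bouquet of `t`
triangles to every vertex of `G`.  Its vertex set is `V ⊕ (V × Fin t × Fin 2)`; vertex `v`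
is joined to the two new vertices `(v, j, 0)` and `(v, j, 1)` of each of its `t` triangles,
and these two are joined to each other. -/
def SimpleGraph.triangleMultiplier {V : Type*} (G : SimpleGraph V) (t : ℕ) :
    SimpleGraph (V ⊕ V × Fin t × Fin 2) where
  Adj x y :=
    match x, y with
    | Sum.inl u, Sum.inl v => G.Adj u v
    | Sum.inl u, Sum.inr p => u = p.1
    | Sum.inr p, Sum.inl u => u = p.1
    | Sum.inr p, Sum.inr q => p.1 = q.1 ∧ p.2.1 = q.2.1 ∧ p.2.2 ≠ q.2.2
  symm := by
    constructor
    rintro (u | p) (v | q) h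
    · exact G.adj_symm h
    · exact h
    · exact h
    · exact ⟨h.1.symm, h.2.1.symm, h.2.2.symm⟩
  loopless := by
    constructor
    rintro (u | p) h
    · exact G.irrefl h
    · exact h.2.2 rfl

open Matrix

namespace SimpleGraph

variable {V : Type*}

theorem Connected.eq_of_sum_neighborFinset_eq_degree_mul [Fintype V] {G : SimpleGraph V}
    (hG : G.Connected) {f : V → ℝ}
    (hf : ∀ v, ∑ u ∈ G.neighborFinset v, f u = G.degree v * f v) (v w : V) :
    f v = f w :=
  (lapMatrix_mulVec_eq_zero_iff_forall_reachable G).1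
    (funext fun u => by simp [lapMatrix_mulVec_apply, hf]) v w (hG v w)

section triangleMultiplier

variable (G : SimpleGraph V) (t : ℕ)

@[simp]
theorem triangleMultiplier_adj_inl_inl (u v : V) :
    (G.triangleMultiplier t).Adj (.inl u) (.inl v) ↔ G.Adj u v := Iff.rfl

@[simp]
theorem triangleMultiplier_adj_inl_inr (u : V) (p : V × Fin t × Fin 2) :
    (G.triangleMultiplier t).Adj (.inl u) (.inr p) ↔ u = p.1 := Iff.rfl

@[simp]
theorem triangleMultiplier_adj_inr_inl (p : V × Fin t × Fin 2) (u : V) :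
    (G.triangleMultiplier t).Adj (.inr p) (.inl u) ↔ u = p.1 := Iff.rfl

@[simp]
theorem triangleMultiplier_adj_inr_inr (p q : V × Fin t × Fin 2) :
    (G.triangleMultiplier t).Adj (.inr p) (.inr q) ↔
      p.1 = q.1 ∧ p.2.1 = q.2.1 ∧ p.2.2 ≠ q.2.2 := Iff.rfl

theorem triangleMultiplier_adjMatrix_mulVec_inl [Fintype V] {R : Type*} [NonAssocSemiring R]
    (x : V ⊕ V × Fin t × Fin 2 → R) (v : V) :
    ((G.triangleMultiplier t).adjMatrix R *ᵥ x) (.inl v) =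
      ∑ u ∈ G.neighborFinset v, x (.inl u) + ∑ j, ∑ k, x (.inr (v, j, k)) := by
  simp [mulVec, dotProduct, Fintype.sum_sum_type, Fintype.sum_prod_type, adjMatrix_apply,
    neighborFinset_eq_filter, Finset.sum_filter, ite_add_ite]

theorem triangleMultiplier_adjMatrix_mulVec_inr [Fintype V] {R : Type*} [NonAssocSemiring R]
    (x : V ⊕ V × Fin t × Fin 2 → R) (v : V) (j : Fin t) (k : Fin 2) :
    ((G.triangleMultiplier t).adjMatrix R *ᵥ x) (.inr (v, j, k)) =
      x (.inl v) + x (.inr (v, j, k + 1)) := by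
  fin_cases k <;> simp [mulVec, dotProduct, Fintype.sum_sum_type, Fintype.sum_prod_type,
    adjMatrix_apply, Fin.sum_univ_two, ite_and]

theorem triangleMultiplier_adjMatrix_mulVec_sumElim [Fintype V] {R : Type*} [NonAssocRing R]
    (hreg : G.IsRegularOfDegree (2 * t)) :
    (G.triangleMultiplier t).adjMatrix R *ᵥ Sum.elim 1 (-1) = 0 := by
  ext (v | ⟨v, j, k⟩)
  · rw [triangleMultiplier_adjMatrix_mulVec_inl]
    simp [hreg v, two_mul, mul_two]
  · rw [triangleMultiplier_adjMatrix_mulVec_inr]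
    simp

theorem eq_smul_sumElim_of_triangleMultiplier_adjMatrix_mulVec_eq_zero [Fintype V]
    (hconn : G.Connected) (hreg : G.IsRegularOfDegree (2 * t))
    {x : V ⊕ V × Fin t × Fin 2 → ℝ} (hx : (G.triangleMultiplier t).adjMatrix ℝ *ᵥ x = 0)
    (w : V) : x = x (.inl w) • Sum.elim (1 : V → ℝ) (-1) := by
  have hinr : ∀ v j k, x (.inr (v, j, k)) = -x (.inl v) := fun v j k => by
    have h := congrFun hx (.inr (v, j, k + 1))
    rw [triangleMultiplier_adjMatrix_mulVec_inr, show k + 1 + 1 = k by fin_cases k <;> rfl] at h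
    exact eq_neg_of_add_eq_zero_right h
  have hinl : ∀ v, ∑ u ∈ G.neighborFinset v, x (.inl u) = G.degree v * x (.inl v) := by
    intro v
    have h := congrFun hx (.inl v)
    simp only [triangleMultiplier_adjMatrix_mulVec_inl, hinr, Finset.sum_const, Finset.card_univ,
      Fintype.card_fin, Pi.zero_apply] at h
    rw [hreg v]
    push_cast
    linear_combination h
  have hconst := hconn.eq_of_sum_neighborFinset_eq_degree_mul hinl
  ext (v | ⟨v, j, k⟩)
  · simp [hconst v w]
  · simp [hinr, hconst v w]

theorem ker_triangleMultiplier_adjMatrix [Fintype V] (hconn : G.Connected)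
    (hreg : G.IsRegularOfDegree (2 * t)) :
    LinearMap.ker ((G.triangleMultiplier t).adjMatrix ℝ).mulVecLin =
      ℝ ∙ Sum.elim (1 : V → ℝ) (-1) := by
  refine le_antisymm (fun x hx => ?_) ((Submodule.span_singleton_le_iff_mem _ _).2 ?_)
  · rw [eq_smul_sumElim_of_triangleMultiplier_adjMatrix_mulVec_eq_zero G t hconn hreg hx
      hconn.nonempty.some]
    exact Submodule.smul_mem _ _ (Submodule.mem_span_singleton_self _)
  · exact triangleMultiplier_adjMatrix_mulVec_sumElim G t hreg

end triangleMultiplier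

theorem isNut_of_ker_adjMatrix_eq_span_singleton [Fintype V] {G : SimpleGraph V}
    (hcard : 2 ≤ Fintype.card V) {e : V → ℝ} (he : ∀ v, e v ≠ 0)
    (hker : LinearMap.ker (G.adjMatrix ℝ).mulVecLin = ℝ ∙ e) : G.IsNut := by
  have he0 : e ≠ 0 := fun h => he (Fintype.card_pos_iff.1 (by omega)).some (congrFun h _)
  refine ⟨hcard, by rw [hker, finrank_span_singleton he0], fun x hx hx0 v => ?_⟩
  obtain ⟨c, rfl⟩ := Submodule.mem_span_singleton.1 (hker ▸ LinearMap.mem_ker.2 hx)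
  exact smul_ne_zero (left_ne_zero_of_smul hx0) (he v)

end SimpleGraph

/-- If `G` is a connected `(2t)`-regular graph with `t ≥ 1`, then the triangle-multiplier
graph `𝓜₃(G)` is a nut graph. -/
theorem triangleMultiplier_isNut {V : Type*} [Fintype V] (G : SimpleGraph V) (t : ℕ)
    (ht : 1 ≤ t) (hconn : G.Connected) (hreg : G.IsRegularOfDegree (2 * t)) :
    (G.triangleMultiplier t).IsNut := by
  refine SimpleGraph.isNut_of_ker_adjMatrix_eq_span_singleton ?_ ?_
    (SimpleGraph.ker_triangleMultiplier_adjMatrix G t hconn hreg)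
  · have := hconn.nonempty
    simp only [Fintype.card_sum, Fintype.card_prod, Fintype.card_fin]
    nlinarith [Fintype.card_pos (α := V)]
  · rintro (v | p) <;> simp
end

section
/- Let G be a nut graph and let e = {u, v} be an edge of G. Then the graph obtained from G by subdividing the edge e four times (replacing e by a path u — a₁ — a₂ — a₃ — a₄ — v through four new vertices) is again a nut graph. -/
open scoped Classical

/-- The graph obtained from `G` by subdividing the edge `{u, v}` four times: the edge
`{u, v}` is replaced by the path `u — 0 — 1 — 2 — 3 — v` through four new vertices. -/
def SimpleGraph.subdivideFour {V : Type*} (G : SimpleGraph V) (u v : V) :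
    SimpleGraph (V ⊕ Fin 4) where
  Adj x y :=
    match x, y with
    | Sum.inl a, Sum.inl b => G.Adj a b ∧ ¬((a = u ∧ b = v) ∨ (a = v ∧ b = u))
    | Sum.inl a, Sum.inr i => (a = u ∧ i = 0) ∨ (a = v ∧ i = 3)
    | Sum.inr i, Sum.inl a => (a = u ∧ i = 0) ∨ (a = v ∧ i = 3)
    | Sum.inr i, Sum.inr j => (i : ℕ) + 1 = (j : ℕ) ∨ (j : ℕ) + 1 = (i : ℕ)
  symm := by
    constructor
    rintro (a | i) (b | j) h
    · exact ⟨G.adj_symm h.1, fun hc => h.2 (by tauto)⟩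
    · exact h
    · exact h
    · exact h.symm
  loopless := by
    constructor
    rintro (a | i) h
    · exact G.irrefl h.1
    · omega

/-!
The kernel of the subdivided graph is the image of the kernel of `G` under an injective linear
extension map. Zero neighbour sums at the four new vertices determine their values from those at
`u` and `v`, and with these values the new path contributes to the rows of `u` and `v` exactly
what the deleted edge `{u, v}` contributed. So the nullity is unchanged
and a full kernel vector of `G` extends to a full kernel vector of the subdivision.
-/

namespace SimpleGraph

open Matrix

variable {V R : Type*} [CommRing R] {G : SimpleGraph V} {u v : V}

/-- Kernel vectors of the subdivided graph: zero neighbour sums along the path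
`u — 0 — 1 — 2 — 3 — v` force the values `x v, -x u, -x v, x u` on the new vertices. -/
def subdivideFourExtend (u v : V) : (V → R) →ₗ[R] V ⊕ Fin 4 → R where
  toFun x := Sum.elim x ![x v, -x u, -x v, x u]
  map_add' x y := by
    ext (a | i)
    · rfl
    · fin_cases i <;> simp [add_comm]
  map_smul' r x := by
    ext (a | i)
    · rfl
    · fin_cases i <;> simp

theorem subdivideFourExtend_injective :
    Function.Injective (subdivideFourExtend (R := R) u v) :=
  fun _ _ hxy => funext fun a => congrFun hxy (.inl a)

theorem subdivideFourExtend_apply_ne_zero {x : V → R} (hx : ∀ a, x a ≠ 0) (z : V ⊕ Fin 4) :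
    subdivideFourExtend u v x z ≠ 0 := by
  rcases z with a | i
  · exact hx a
  · fin_cases i <;> simp [subdivideFourExtend, hx]

theorem subdivideFour_adjMatrix_inl_inl (he : G.Adj u v) (a b : V) :
    (G.subdivideFour u v).adjMatrix R (.inl a) (.inl b) =
      G.adjMatrix R a b - (if a = u ∧ b = v then 1 else 0) -
        (if a = v ∧ b = u then 1 else 0) := by
  have := he.ne
  have := he.symm
  by_cases h1 : a = u <;> by_cases h2 : b = v <;> by_cases h3 : a = v <;> by_cases h4 : b = u <;>
    simp_all [subdivideFour, adjMatrix_apply]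

variable [Fintype V]

theorem subdivideFour_mulVec_inl (he : G.Adj u v) (y : V ⊕ Fin 4 → R) (w : V) :
    ((G.subdivideFour u v).adjMatrix R *ᵥ y) (.inl w) =
      (G.adjMatrix R *ᵥ (y ∘ Sum.inl)) w
        + (if w = u then y (.inr 0) - y (.inl v) else 0)
        + (if w = v then y (.inr 3) - y (.inl u) else 0) := by
  simp only [mulVec, dotProduct, Fintype.sum_sum_type, Fin.sum_univ_four,
    subdivideFour_adjMatrix_inl_inl he, sub_mul, Finset.sum_sub_distrib]
  have := he.ne
  by_cases h1 : w = u <;> by_cases h2 : w = v <;>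
    simp_all [subdivideFour, adjMatrix_apply] <;> abel

theorem subdivideFour_mulVec_comp_inr (y : V ⊕ Fin 4 → R) :
    ((G.subdivideFour u v).adjMatrix R *ᵥ y) ∘ Sum.inr =
      ![y (.inl u) + y (.inr 1), y (.inr 0) + y (.inr 2),
        y (.inr 1) + y (.inr 3), y (.inl v) + y (.inr 2)] := by
  funext i
  fin_cases i <;> simp [mulVec, dotProduct, Fintype.sum_sum_type, Fin.sum_univ_four, subdivideFour]

theorem subdivideFour_mulVec_subdivideFourExtend (he : G.Adj u v) (x : V → R) :
    (G.subdivideFour u v).adjMatrix R *ᵥ subdivideFourExtend u v x =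
      Sum.elim (G.adjMatrix R *ᵥ x) 0 := by
  ext (w | i)
  · rw [subdivideFour_mulVec_inl he]
    simp [subdivideFourExtend, Function.comp_def]
  · rw [← Function.comp_apply (f := _ *ᵥ _), subdivideFour_mulVec_comp_inr]
    fin_cases i <;> simp [subdivideFourExtend]

theorem eq_subdivideFourExtend_of_mulVec_eq_zero {y : V ⊕ Fin 4 → R}
    (hy : (G.subdivideFour u v).adjMatrix R *ᵥ y = 0) :
    y = subdivideFourExtend u v (y ∘ Sum.inl) := by
  have hpath := subdivideFour_mulVec_comp_inr (G := G) (u := u) (v := v) y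
  rw [hy] at hpath
  have h0 := congrFun hpath 0
  have h1 := congrFun hpath 1
  have h2 := congrFun hpath 2
  have h3 := congrFun hpath 3
  simp only [Pi.zero_comp, Pi.zero_apply, cons_val] at h0 h1 h2 h3
  ext (a | i)
  · rfl
  · fin_cases i <;> simp [subdivideFourExtend] <;> grind

theorem ker_subdivideFour (he : G.Adj u v) :
    LinearMap.ker ((G.subdivideFour u v).adjMatrix R).mulVecLin =
      (LinearMap.ker (G.adjMatrix R).mulVecLin).map (subdivideFourExtend u v) := by
  ext y
  simp only [LinearMap.mem_ker, mulVecLin_apply, Submodule.mem_map]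
  constructor
  · intro hy
    have hy_eq := eq_subdivideFourExtend_of_mulVec_eq_zero hy
    refine ⟨y ∘ Sum.inl, ?_, hy_eq.symm⟩
    funext w
    have := congrFun (subdivideFour_mulVec_subdivideFourExtend he (y ∘ Sum.inl)) (.inl w)
    rwa [← hy_eq, hy, eq_comm] at this
  · rintro ⟨x, hx, rfl⟩
    rw [subdivideFour_mulVec_subdivideFourExtend he, hx, Sum.elim_zero_zero]

end SimpleGraph

/-- Subdividing an edge of a nut graph four times yields a nut graph. -/
theorem subdivideFour_isNut {V : Type*} [Fintype V] (G : SimpleGraph V) (u v : V)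
    (he : G.Adj u v) (h : G.IsNut) :
    (G.subdivideFour u v).IsNut := by
  obtain ⟨-, hrank, hfull⟩ := h
  have hker := G.ker_subdivideFour (R := ℝ) he
  refine ⟨by simp, ?_, fun y hy hy0 => ?_⟩
  · rw [hker, ← hrank, ← (Submodule.equivMapOfInjective _
      SimpleGraph.subdivideFourExtend_injective _).finrank_eq]
  · rw [← LinearMap.mem_ker, hker] at hy
    obtain ⟨x, hx, rfl⟩ := hy
    refine SimpleGraph.subdivideFourExtend_apply_ne_zero (hfull x hx ?_)
    rintro rfl
    exact hy0 (map_zero _)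
end

section
/- No nut graph is bipartite. -/
open scoped Classical

/-- No nut graph is bipartite: the vertex set of a nut graph cannot be partitioned into
two parts such that every edge joins a vertex of one part to a vertex of the other. -/
theorem nut_not_bipartite {V : Type*} [Fintype V] (G : SimpleGraph V) (h : G.IsNut) :
    ¬ ∃ A B : Set V, (∀ v : V, (v ∈ A ∨ v ∈ B) ∧ ¬(v ∈ A ∧ v ∈ B)) ∧
      (∀ u w : V, G.Adj u w → (u ∈ A ∧ w ∈ B) ∨ (u ∈ B ∧ w ∈ A)) := by
  rintro ⟨A, B, hpart, hedge⟩
  obtain ⟨hcard, hker, hnz⟩ := h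
  -- obtain a nonzero kernel vector x
  have hne : LinearMap.ker (Matrix.mulVecLin (G.adjMatrix ℝ)) ≠ ⊥ := by
    intro hb
    rw [hb, finrank_bot] at hker
    norm_num at hker
  obtain ⟨x, hxker, hx0⟩ := Submodule.exists_mem_ne_zero_of_ne_bot hne
  have hxker' : Matrix.mulVecLin (G.adjMatrix ℝ) x = 0 := LinearMap.mem_ker.mp hxker
  have hxall : ∀ v : V, x v ≠ 0 := hnz x hxker' hx0
  -- G has an edge
  have hedge_ex : ∃ u w : V, G.Adj u w := by
    by_contra hno
    push_neg at hno
    have hA0 : G.adjMatrix ℝ = 0 := by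
      ext i j
      simp [SimpleGraph.adjMatrix, hno i j]
    rw [hA0, Matrix.mulVecLin_zero, LinearMap.ker_zero, finrank_top,
      Module.finrank_fintype_fun_eq_card] at hker
    omega
  obtain ⟨u, w, huw⟩ := hedge_ex
  -- the sign-flipped vector
  set y : V → ℝ := fun v => if v ∈ A then x v else -x v with hy
  have hsum : ∀ v : V, ∑ t ∈ G.neighborFinset v, x t = 0 := by
    intro v
    have := congrFun hxker' v
    simpa [Matrix.mulVecLin_apply, SimpleGraph.adjMatrix_mulVec_apply] using this
  have hyker : Matrix.mulVecLin (G.adjMatrix ℝ) y = 0 := by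
    funext v
    have : ∑ t ∈ G.neighborFinset v, y t = 0 := by
      by_cases hvA : v ∈ A
      · have heq : ∀ t ∈ G.neighborFinset v, y t = -x t := by
          intro t ht
          rw [SimpleGraph.mem_neighborFinset] at ht
          rcases hedge v t ht with ⟨_, htB⟩ | ⟨hvB, _⟩
          · have htA : t ∉ A := fun htA => (hpart t).2 ⟨htA, htB⟩
            simp [hy, htA]
          · exact absurd ⟨hvA, hvB⟩ (hpart v).2
        rw [Finset.sum_congr rfl heq, Finset.sum_neg_distrib, hsum v, neg_zero]
      · have heq : ∀ t ∈ G.neighborFinset v, y t = x t := by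
          intro t ht
          rw [SimpleGraph.mem_neighborFinset] at ht
          rcases hedge v t ht with ⟨hvA', _⟩ | ⟨_, htA⟩
          · exact absurd hvA' hvA
          · simp [hy, htA]
        rw [Finset.sum_congr rfl heq, hsum v]
    simpa [Matrix.mulVecLin_apply, SimpleGraph.adjMatrix_mulVec_apply] using this
  -- y is a scalar multiple of x
  have hx0' : (⟨x, hxker⟩ : LinearMap.ker (Matrix.mulVecLin (G.adjMatrix ℝ))) ≠ 0 := by
    simpa [Subtype.ext_iff] using hx0
  obtain ⟨c, hc⟩ := (finrank_eq_one_iff_of_nonzero' _ hx0').mp hker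
    ⟨y, LinearMap.mem_ker.mpr hyker⟩
  have hc' : ∀ v : V, c * x v = y v := by
    intro v
    have h1 := congrArg Subtype.val hc
    have h2 := congrFun h1 v
    simpa using h2
  -- find a vertex in A and one in B
  obtain ⟨a, b, haA, hbB⟩ : ∃ a b : V, a ∈ A ∧ b ∈ B := by
    rcases hedge u w huw with ⟨h1, h2⟩ | ⟨h1, h2⟩
    · exact ⟨u, w, h1, h2⟩
    · exact ⟨w, u, h2, h1⟩
  have hbA : b ∉ A := fun hbA => (hpart b).2 ⟨hbA, hbB⟩
  have hca : c = 1 := by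
    have := hc' a
    simp only [hy, if_pos haA] at this
    have h2 : (c - 1) * x a = 0 := by linear_combination this
    rcases mul_eq_zero.mp h2 with h | h
    · linarith
    · exact absurd h (hxall a)
  have hcb : c = -1 := by
    have := hc' b
    simp only [hy, if_neg hbA] at this
    have h2 : (c + 1) * x b = 0 := by linear_combination this
    rcases mul_eq_zero.mp h2 with h | h
    · linarith
    · exact absurd h (hxall b)
  rw [hca] at hcb
  norm_num at hcb
end

section
/- No nut graph is edge-transitive; that is, for every nut graph G, the automorphism group of G does not act transitively on the edge set of G. -/
open scoped Classical

/-- No nut graph is edge-transitive: the automorphism group of a nut graph does not act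
transitively on its edge set. -/
theorem nut_not_edgeTransitive {V : Type*} [Fintype V] (G : SimpleGraph V) (h : G.IsNut) :
    ¬ ∀ e₁ ∈ G.edgeSet, ∀ e₂ ∈ G.edgeSet,
        ∃ σ ∈ G.autGroup, Sym2.map (⇑σ) e₁ = e₂ := by
  obtain ⟨hcard, hdim, hker⟩ := h
  intro htr
  set A : Matrix V V ℝ := G.adjMatrix ℝ with hA
  -- a nonzero kernel vector
  have hne : LinearMap.ker (Matrix.mulVecLin A) ≠ ⊥ := by
    intro hb
    rw [hb] at hdim
    simp at hdim
  obtain ⟨x, hxker, hx0⟩ := Submodule.exists_mem_ne_zero_of_ne_bot hne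
  have hxker' : Matrix.mulVecLin A x = 0 := hxker
  have hxnz : ∀ v, x v ≠ 0 := hker x hxker' hx0
  have hAx : ∀ u : V, ∑ v, A u v * x v = 0 := by
    intro u
    have := congrFun hxker' u
    simpa [Matrix.mulVecLin_apply, Matrix.mulVec, dotProduct] using this
  -- G has an edge
  have hE : ∃ u v : V, G.Adj u v := by
    by_contra hno
    push_neg at hno
    have hA0 : A = 0 := by
      ext u v
      simp [hA, SimpleGraph.adjMatrix_apply, hno u v]
    have : LinearMap.ker (Matrix.mulVecLin A) = ⊤ := by
      rw [hA0]
      simp [Matrix.mulVecLin_zero]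
    rw [this, finrank_top] at hdim
    rw [Module.finrank_pi] at hdim
    omega
  obtain ⟨u₀, v₀, huv₀⟩ := hE
  -- key invariance: for σ ∈ Aut G, products of kernel entries are preserved
  have key : ∀ σ ∈ G.autGroup, ∀ a b : V, x (σ a) * x (σ b) = x a * x b := by
    intro σ hσ a b
    have hadj : ∀ u v : V, G.Adj (σ u) (σ v) ↔ G.Adj u v := hσ
    have hAσ : ∀ u v : V, A (σ u) (σ v) = A u v := by
      intro u v
      simp [hA, SimpleGraph.adjMatrix_apply, hadj u v]
    -- y := x ∘ σ is in the kernel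
    have hy : Matrix.mulVecLin A (fun v => x (σ v)) = 0 := by
      funext u
      have h1 : ∑ v, A u v * x (σ v) = ∑ v, A (σ u) (σ v) * x (σ v) := by
        refine Finset.sum_congr rfl fun v _ => ?_
        rw [hAσ u v]
      have h2 : ∑ v, A (σ u) (σ v) * x (σ v) = ∑ w, A (σ u) w * x w :=
        Fintype.sum_equiv σ _ _ (fun v => rfl)
      simp only [Matrix.mulVecLin_apply, Matrix.mulVec, dotProduct,
        Pi.zero_apply]
      rw [h1, h2]
      exact hAx (σ u)
    -- w := x u₀ • y − y u₀ • x is in the kernel and vanishes at u₀, hence is 0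
    have hw : Matrix.mulVecLin A
        (x u₀ • (fun v => x (σ v)) - x (σ u₀) • x) = 0 := by
      rw [map_sub, map_smul, map_smul, hy, hxker']
      simp
    have hwzero : (x u₀ • (fun v => x (σ v)) - x (σ u₀) • x) = 0 := by
      by_contra hwnz
      have := hker _ hw hwnz u₀
      apply this
      simp [mul_comm]
    have hrel : ∀ v : V, x u₀ * x (σ v) = x (σ u₀) * x v := by
      intro v
      have := congrFun hwzero v
      simpa [sub_eq_zero] using this
    -- squares: (x (σ u₀))² = (x u₀)²
    have hS : (0:ℝ) < ∑ v, x v ^ 2 := by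
      refine Finset.sum_pos' (fun v _ => sq_nonneg _) ⟨u₀, Finset.mem_univ _, ?_⟩
      have := hxnz u₀
      positivity
    have hsq : x (σ u₀) ^ 2 = x u₀ ^ 2 := by
      have h1 : ∑ v, x (σ v) ^ 2 = ∑ v, x v ^ 2 :=
        Fintype.sum_equiv σ _ _ (fun v => rfl)
      have h2 : ∀ v, (x u₀)^2 * x (σ v) ^ 2 = (x (σ u₀))^2 * x v ^ 2 := by
        intro v
        have := hrel v
        calc (x u₀)^2 * x (σ v) ^ 2 = (x u₀ * x (σ v))^2 := by ring
        _ = (x (σ u₀) * x v)^2 := by rw [this]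
        _ = (x (σ u₀))^2 * x v ^ 2 := by ring
      have h3 : (x u₀)^2 * ∑ v, x (σ v) ^ 2 = (x (σ u₀))^2 * ∑ v, x v ^ 2 := by
        rw [Finset.mul_sum, Finset.mul_sum]
        exact Finset.sum_congr rfl fun v _ => h2 v
      rw [h1] at h3
      exact (mul_right_cancel₀ (ne_of_gt hS) h3).symm
    -- conclude
    have hx₀ : x u₀ ≠ 0 := hxnz u₀
    have e1 : x u₀ * x (σ a) = x (σ u₀) * x a := hrel a
    have e2 : x u₀ * x (σ b) = x (σ u₀) * x b := hrel b
    have : (x u₀)^2 * (x (σ a) * x (σ b)) = (x u₀)^2 * (x a * x b) := by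
      calc (x u₀)^2 * (x (σ a) * x (σ b))
          = (x u₀ * x (σ a)) * (x u₀ * x (σ b)) := by ring
        _ = (x (σ u₀) * x a) * (x (σ u₀) * x b) := by rw [e1, e2]
        _ = (x (σ u₀))^2 * (x a * x b) := by ring
        _ = (x u₀)^2 * (x a * x b) := by rw [hsq]
    exact mul_left_cancel₀ (pow_ne_zero 2 hx₀) this
  -- all edges have the same kernel-entry product c
  set c : ℝ := x u₀ * x v₀ with hc
  have hcne : c ≠ 0 := mul_ne_zero (hxnz u₀) (hxnz v₀)
  have hedge : ∀ a b : V, G.Adj a b → x a * x b = c := by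
    intro a b hab
    obtain ⟨σ, hσ, hmap⟩ := htr s(u₀, v₀) (G.mem_edgeSet.mpr huv₀)
      s(a, b) (G.mem_edgeSet.mpr hab)
    rw [Sym2.map_pair_eq, Sym2.eq_iff] at hmap
    rcases hmap with ⟨h1, h2⟩ | ⟨h1, h2⟩
    · rw [← h1, ← h2, hc]
      exact key σ hσ u₀ v₀
    · rw [← h1, ← h2, mul_comm, hc]
      exact key σ hσ u₀ v₀
  -- xᵀ A x = 0 but equals c · (number of adjacent ordered pairs) > 0 in absolute value
  have hterm : ∀ u v : V, A u v * x u * x v = A u v * c := by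
    intro u v
    by_cases hadj : G.Adj u v
    · have : A u v = 1 := by simp [hA, SimpleGraph.adjMatrix_apply, hadj]
      rw [this, one_mul, one_mul, hedge u v hadj]
    · have : A u v = 0 := by simp [hA, SimpleGraph.adjMatrix_apply, hadj]
      simp [this]
  have hquad : ∑ u, ∑ v, A u v * x u * x v = 0 := by
    have : ∀ u : V, ∑ v, A u v * x u * x v = 0 := by
      intro u
      have : ∑ v, A u v * x u * x v = x u * ∑ v, A u v * x v := by
        rw [Finset.mul_sum]
        exact Finset.sum_congr rfl fun v _ => by ring
      rw [this, hAx u, mul_zero]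
    exact Finset.sum_eq_zero fun u _ => this u
  have hquad' : (∑ u, ∑ v, A u v) * c = 0 := by
    rw [← hquad, Finset.sum_mul]
    refine Finset.sum_congr rfl fun u _ => ?_
    rw [Finset.sum_mul]
    exact Finset.sum_congr rfl fun v _ => (hterm u v).symm
  have hpos : (0:ℝ) < ∑ u, ∑ v, A u v := by
    have hnonneg : ∀ u ∈ Finset.univ, (0:ℝ) ≤ ∑ v, A u v := by
      intro u _
      exact Finset.sum_nonneg fun v _ => by
        simp [hA, SimpleGraph.adjMatrix_apply]
        split <;> norm_num
    refine Finset.sum_pos' hnonneg ⟨u₀, Finset.mem_univ _, ?_⟩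
    refine Finset.sum_pos' (fun v _ => ?_) ⟨v₀, Finset.mem_univ _, ?_⟩
    · simp [hA, SimpleGraph.adjMatrix_apply]
      split <;> norm_num
    · simp [hA, SimpleGraph.adjMatrix_apply, huv₀]
  exact hcne (by
    rcases mul_eq_zero.mp hquad' with h | h
    · exact absurd h (ne_of_gt hpos)
    · exact h)
end

section
/- For every finite group 𝔊 there exists a finite simple graph G whose automorphism group Aut(G) is isomorphic (as a group) to 𝔊. -/
open scoped Classical

/-!
Frucht's construction. Fix an injection `ι : 𝔊 → ℕ`. Replace every arc `g → g * x` (`x ≠ 1`) of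
the complete Cayley digraph of `𝔊` by a path `g — t — h — g * x` and hang at `t` and at `h`
pendant paths ("arms") of lengths `2 ι x + 1` and `2 ι x + 2`. Left multiplication acts by
automorphisms. Conversely, an automorphism sends leaves to leaves, and walking down from a leaf
it sends each arm onto an arm of the same length, that is with the same label and end. Hence it
permutes the group vertices by some `F` with `F (g * x) = F g * x`: it is left multiplication
by `F 1`.
-/

namespace SimpleGraph

variable {V W : Type*} {G : SimpleGraph V} {H : SimpleGraph W}

def autGroupEquiv (G : SimpleGraph V) : G.autGroup ≃* (G ≃g G) where
  toFun σ := ⟨σ.1, σ.2 _ _⟩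
  invFun φ := ⟨φ.toEquiv, fun _ _ => φ.map_adj_iff⟩
  left_inv _ := rfl
  right_inv _ := rfl
  map_mul' _ _ := rfl

def Iso.autCongr (e : G ≃g H) : (G ≃g G) ≃* (H ≃g H) where
  toFun φ := (e.symm.trans φ).trans e
  invFun ψ := (e.trans ψ).trans e.symm
  left_inv φ := by ext; simp
  right_inv ψ := by ext; simp
  map_mul' φ ψ := by ext; simp [RelIso.mul_apply]

theorem Iso.encard_neighborSet (φ : G ≃g H) (v : V) :
    (H.neighborSet (φ v)).encard = (G.neighborSet v).encard := by
  rw [← φ.image_neighborSet, φ.injective.encard_image]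

structure IsPendantPath (G : SimpleGraph V) (p : ℕ → V) (L : ℕ) : Prop where
  injOn : Set.InjOn p (Set.Iic L)
  adj_iff : ∀ i, 0 < i → i ≤ L → ∀ w, G.Adj (p i) w ↔ w = p (i - 1) ∨ i < L ∧ w = p (i + 1)

namespace IsPendantPath

variable {p : ℕ → V} {q : ℕ → W} {L M : ℕ}

theorem adj_succ (hp : G.IsPendantPath p L) {i : ℕ} (hi : i < L) : G.Adj (p i) (p (i + 1)) :=
  ((hp.adj_iff (i + 1) i.succ_pos hi _).2 (Or.inl rfl)).symm

theorem neighborSet_subset (hp : G.IsPendantPath p L) {i : ℕ} (h0 : 0 < i) (hi : i ≤ L) :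
    G.neighborSet (p i) ⊆ {p (i - 1), p (i + 1)} := fun w hw => by
  rcases (hp.adj_iff i h0 hi w).1 hw with h | ⟨-, h⟩ <;> simp [h]

theorem encard_neighborSet_le_two (hp : G.IsPendantPath p L) {i : ℕ} (h0 : 0 < i)
    (hi : i ≤ L) : (G.neighborSet (p i)).encard ≤ 2 :=
  (Set.encard_le_encard (hp.neighborSet_subset h0 hi)).trans <|
    (Set.encard_insert_le _ _).trans (by rw [Set.encard_singleton]; rfl)

theorem neighborSet_subsingleton (hp : G.IsPendantPath p L) (hL : 0 < L) :
    (G.neighborSet (p L)).Subsingleton := fun u hu w hw => by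
  rcases (hp.adj_iff L hL le_rfl u).1 hu with rfl | ⟨h, -⟩ <;>
    rcases (hp.adj_iff L hL le_rfl w).1 hw with rfl | ⟨h', -⟩ <;> first | rfl | omega

/-- Walking down from the leaves: the neighbour of `p (L - k)` further from the leaf must go
to the neighbour of `q (M - k)` further from the leaf, since the other one is already taken. -/
theorem iso_apply_sub (φ : G ≃g H) (hp : G.IsPendantPath p L) (hq : H.IsPendantPath q M)
    (h : φ (p L) = q M) : ∀ k ≤ L, k ≤ M → φ (p (L - k)) = q (M - k) := by
  intro k
  induction k using Nat.strong_induction_on with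
  | _ k ih =>
    rcases k with _ | k
    · simpa using h
    intro hkL hkM
    have hadj : H.Adj (q (M - k)) (φ (p (L - (k + 1)))) := by
      rw [← ih k k.lt_succ_self (by omega) (by omega), φ.map_adj_iff]
      exact (hp.adj_iff (L - k) (by omega) (Nat.sub_le _ _) _).2 (Or.inl (congrArg p (by omega)))
    rcases (hq.adj_iff (M - k) (by omega) (Nat.sub_le _ _) _).1 hadj with h' | ⟨hlt, h'⟩
    · exact h'.trans (congrArg q (by omega))
    · have hprev := ih (k - 1) (by omega) (by omega) (by omega)
      have hsame : p (L - (k + 1)) = p (L - (k - 1)) :=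
        φ.injective (h'.trans (hprev.trans (congrArg q (by omega))).symm)
      have := hp.injOn (Set.mem_Iic.2 (Nat.sub_le _ _)) (Set.mem_Iic.2 (Nat.sub_le _ _)) hsame
      omega

theorem le_of_iso_apply_eq (φ : G ≃g H) (hp : G.IsPendantPath p L) (hq : H.IsPendantPath q M)
    (hq0 : 2 < (H.neighborSet (q 0)).encard) (h : φ (p L) = q M) : L ≤ M := by
  by_contra! hML
  have h0 : φ (p (L - M)) = q 0 := by simpa using hp.iso_apply_sub φ hq h M hML.le le_rfl
  rw [← h0, φ.encard_neighborSet] at hq0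
  exact (hp.encard_neighborSet_le_two (by omega) (Nat.sub_le _ _)).not_gt hq0

theorem iso_apply_eq (φ : G ≃g H) (hp : G.IsPendantPath p L) (hq : H.IsPendantPath q M)
    (hp0 : 2 < (G.neighborSet (p 0)).encard) (hq0 : 2 < (H.neighborSet (q 0)).encard)
    (h : φ (p L) = q M) : L = M ∧ ∀ i ≤ L, φ (p i) = q i := by
  obtain rfl : L = M := le_antisymm (hp.le_of_iso_apply_eq φ hq hq0 h)
    (hq.le_of_iso_apply_eq φ.symm hp hp0 (by rw [← h, φ.symm_apply_apply]))
  refine ⟨rfl, fun i hi => ?_⟩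
  simpa [Nat.sub_sub_self hi] using hp.iso_apply_sub φ hq h (L - i) (Nat.sub_le _ _) (Nat.sub_le _ _)

end IsPendantPath

end SimpleGraph

namespace Frucht

variable {𝔊 : Type*} [Group 𝔊]

/-- The arm at the tail (`isHead = false`) or at the head of the gadget replacing the arc
`src → src * label`. -/
@[ext]
structure Arm (𝔊 : Type*) [Group 𝔊] where
  src : 𝔊
  label : 𝔊
  label_ne_one : label ≠ 1
  isHead : Bool

namespace Arm

def mate (a : Arm 𝔊) : Arm 𝔊 := { a with isHead := !a.isHead }

def attach (a : Arm 𝔊) : 𝔊 := if a.isHead then a.src * a.label else a.src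

def length (ι : 𝔊 → ℕ) (a : Arm 𝔊) : ℕ := 2 * ι a.label + if a.isHead then 2 else 1

theorem mate_ne (a : Arm 𝔊) : a.mate ≠ a := fun h => by
  simpa [mate] using congrArg isHead h

theorem mate_mate (a : Arm 𝔊) : a.mate.mate = a := by
  simp [mate]

theorem length_pos (ι : 𝔊 → ℕ) (a : Arm 𝔊) : 0 < a.length ι := by
  unfold length
  split <;> omega

theorem label_eq_and_isHead_eq_of_length_eq {ι : 𝔊 → ℕ} (hι : Function.Injective ι)
    {a b : Arm 𝔊} (h : a.length ι = b.length ι) : a.label = b.label ∧ a.isHead = b.isHead := by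
  unfold length at h
  split_ifs at h with ha hb hb
  · exact ⟨hι (by omega), ha.trans hb.symm⟩
  · omega
  · omega
  · exact ⟨hι (by omega), by simp_all⟩

theorem eq_of_attach_eq {a b : Arm 𝔊} (hl : a.label = b.label) (hh : a.isHead = b.isHead)
    (h : a.attach = b.attach) : a = b := by
  refine Arm.ext ?_ hl hh
  unfold attach at h
  rw [hl, hh] at h
  split at h
  · exact mul_right_cancel h
  · exact h

instance : MulAction 𝔊 (Arm 𝔊) where
  smul c a := { a with src := c * a.src }
  one_smul a := Arm.ext (one_mul a.src) rfl rfl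
  mul_smul c d a := Arm.ext (mul_assoc c d a.src) rfl rfl

theorem attach_smul (c : 𝔊) (a : Arm 𝔊) : (c • a).attach = c * a.attach := by
  change (if a.isHead then c * a.src * a.label else c * a.src) = _
  unfold attach
  split <;> simp [mul_assoc]

theorem mate_smul (c : 𝔊) (a : Arm 𝔊) : (c • a).mate = c • a.mate := rfl

end Arm

@[ext]
structure ArmVertex (ι : 𝔊 → ℕ) where
  arm : Arm 𝔊
  pos : ℕ
  pos_le : pos ≤ arm.length ι

variable {ι : 𝔊 → ℕ}

instance [Finite 𝔊] : Finite (Arm 𝔊) :=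
  Finite.of_injective (fun a : Arm 𝔊 => (a.src, a.label, a.isHead)) fun a b h => by
    simp only [Prod.mk.injEq] at h
    exact Arm.ext h.1 h.2.1 h.2.2

instance [Finite 𝔊] : Finite (ArmVertex ι) :=
  Finite.of_equiv (Σ a : Arm 𝔊, Fin (a.length ι + 1))
    { toFun := fun v => ⟨v.1, v.2, Nat.le_of_lt_succ v.2.isLt⟩
      invFun := fun v => ⟨v.arm, v.pos, Nat.lt_succ_of_le v.pos_le⟩
      left_inv := fun _ => rfl
      right_inv := fun _ => rfl }

instance : MulAction 𝔊 (ArmVertex ι) where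
  smul c v := ⟨c • v.arm, v.pos, v.pos_le⟩
  one_smul v := ArmVertex.ext (one_smul 𝔊 v.arm) rfl
  mul_smul c d v := ArmVertex.ext (mul_smul c d v.arm) rfl

@[simp] theorem ArmVertex.smul_arm (c : 𝔊) (v : ArmVertex ι) : (c • v).arm = c • v.arm := rfl

@[simp] theorem ArmVertex.smul_pos (c : 𝔊) (v : ArmVertex ι) : (c • v).pos = v.pos := rfl

variable (ι) in
def graph : SimpleGraph (𝔊 ⊕ ArmVertex ι) where
  Adj
    | .inl _, .inl _ => False
    | .inl g, .inr v | .inr v, .inl g => v.pos = 0 ∧ v.arm.attach = g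
    | .inr v, .inr w => v.arm = w.arm ∧ (w.pos = v.pos + 1 ∨ v.pos = w.pos + 1) ∨
        v.pos = 0 ∧ w.pos = 0 ∧ w.arm = v.arm.mate
  symm := by
    constructor
    rintro (g | v) (h | w) hadj
    · exact hadj
    · exact hadj
    · exact hadj
    · rcases hadj with ⟨harm, hpos⟩ | ⟨hv, hw, hmate⟩
      · exact Or.inl ⟨harm.symm, hpos.symm⟩
      · exact Or.inr ⟨hw, hv, by rw [hmate, Arm.mate_mate]⟩
  loopless := by
    constructor
    rintro (g | v) hadj
    · exact hadj
    · rcases hadj with ⟨-, hpos⟩ | ⟨-, -, hmate⟩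
      · omega
      · exact v.arm.mate_ne hmate.symm

@[simp] theorem graph_adj_inl_inl {g h : 𝔊} : ¬ (graph ι).Adj (.inl g) (.inl h) := id

@[simp] theorem graph_adj_inl_inr {g : 𝔊} {v : ArmVertex ι} :
    (graph ι).Adj (.inl g) (.inr v) ↔ v.pos = 0 ∧ v.arm.attach = g := Iff.rfl

@[simp] theorem graph_adj_inr_inl {g : 𝔊} {v : ArmVertex ι} :
    (graph ι).Adj (.inr v) (.inl g) ↔ v.pos = 0 ∧ v.arm.attach = g := Iff.rfl

@[simp] theorem graph_adj_inr_inr {v w : ArmVertex ι} :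
    (graph ι).Adj (.inr v) (.inr w) ↔ v.arm = w.arm ∧ (w.pos = v.pos + 1 ∨ v.pos = w.pos + 1) ∨
      v.pos = 0 ∧ w.pos = 0 ∧ w.arm = v.arm.mate := Iff.rfl

theorem graph_adj_smul (c : 𝔊) (x y : 𝔊 ⊕ ArmVertex ι) :
    (graph ι).Adj (c • x) (c • y) ↔ (graph ι).Adj x y := by
  rcases x with g | v <;> rcases y with h | w
  all_goals simp [Arm.attach_smul, Arm.mate_smul]

variable (ι) in
/-- Clamped at the top of the arm, so that it is a total function of the position. -/
def armVertex (a : Arm 𝔊) (j : ℕ) : 𝔊 ⊕ ArmVertex ι :=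
  .inr ⟨a, min j (a.length ι), min_le_right _ _⟩

theorem armVertex_pos (v : ArmVertex ι) : armVertex ι v.arm v.pos = .inr v := by
  simp [armVertex, v.pos_le]

theorem armVertex_min_length (a : Arm 𝔊) (j : ℕ) :
    armVertex ι a (min j (a.length ι)) = armVertex ι a j := by
  simp [armVertex]

theorem smul_armVertex (c : 𝔊) (a : Arm 𝔊) (j : ℕ) :
    c • armVertex ι a j = armVertex ι (c • a) j := rfl

theorem isPendantPath_armVertex (a : Arm 𝔊) :
    (graph ι).IsPendantPath (armVertex ι a) (a.length ι) where
  injOn i hi j hj h := by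
    simp only [armVertex, Sum.inr.injEq, ArmVertex.ext_iff] at h
    simp only [Set.mem_Iic] at hi hj
    omega
  adj_iff i h0 hi w := by
    have hmin : ∀ k ≤ a.length ι, min k (a.length ι) = k := fun k hk => min_eq_left hk
    rcases w with g | ⟨b, j, hj⟩
    · simp only [armVertex, graph_adj_inr_inl, min_eq_zero, reduceCtorEq, and_false, or_self,
        iff_false, not_and]
      omega
    · simp only [armVertex, graph_adj_inr_inr, Sum.inr.injEq, ArmVertex.mk.injEq, hmin i hi,
        hmin (i - 1) (by omega)]
      constructor
      · rintro (⟨rfl, rfl | rfl⟩ | ⟨hpos, -⟩)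
        · exact Or.inr ⟨by omega, rfl, (hmin _ hj).symm⟩
        · exact Or.inl ⟨rfl, by omega⟩
        · omega
      · rintro (⟨rfl, rfl⟩ | ⟨hlt, rfl, rfl⟩)
        · exact Or.inl ⟨rfl, Or.inr (by omega)⟩
        · exact Or.inl ⟨rfl, Or.inl (hmin _ hlt)⟩

theorem adj_armVertex_zero_attach (a : Arm 𝔊) : (graph ι).Adj (armVertex ι a 0) (.inl a.attach) :=
  ⟨by simp, rfl⟩

theorem adj_armVertex_zero_mate (a : Arm 𝔊) :
    (graph ι).Adj (armVertex ι a 0) (armVertex ι a.mate 0) :=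
  Or.inr ⟨by simp, by simp, rfl⟩

theorem mate_eq_of_adj_armVertex_zero {a b : Arm 𝔊}
    (h : (graph ι).Adj (armVertex ι a 0) (armVertex ι b 0)) : b = a.mate := by
  simpa [armVertex] using h

theorem two_lt_encard_neighborSet_armVertex_zero (a : Arm 𝔊) :
    2 < ((graph ι).neighborSet (armVertex ι a 0)).encard := by
  have hsub : {.inl a.attach, armVertex ι a.mate 0, armVertex ι a 1} ⊆
      (graph ι).neighborSet (armVertex ι a 0) := by
    rintro _ (rfl | rfl | rfl)
    · exact adj_armVertex_zero_attach a
    · exact adj_armVertex_zero_mate a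
    · exact (isPendantPath_armVertex a).adj_succ (a.length_pos ι)
  refine lt_of_lt_of_le ?_ (Set.encard_le_encard hsub)
  rw [Set.encard_eq_three.2 ⟨_, _, _, ?_, ?_, ?_, rfl⟩]
  · norm_num
  · simp [armVertex]
  · simp [armVertex]
  · have := a.length_pos ι
    simp only [armVertex, zero_le, inf_of_le_left, ne_eq, Sum.inr.injEq, ArmVertex.mk.injEq,
      not_and]
    omega

theorem exists_eq_armVertex_length_of_subsingleton (x : 𝔊) (hx : x ≠ 1) {u : 𝔊 ⊕ ArmVertex ι}
    (hu : ((graph ι).neighborSet u).Subsingleton) : ∃ a : Arm 𝔊, u = armVertex ι a (a.length ι) := by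
  rcases u with g | v
  · have := @hu (.inr ⟨⟨g, x, hx, false⟩, 0, Nat.zero_le _⟩) ⟨rfl, rfl⟩
      (.inr ⟨⟨g * x⁻¹, x, hx, true⟩, 0, Nat.zero_le _⟩) ⟨rfl, by simp [Arm.attach]⟩
    simp at this
  refine ⟨v.arm, ?_⟩
  by_contra hne
  have hlt : v.pos < v.arm.length ι :=
    v.pos_le.lt_of_ne fun h => hne (by rw [← armVertex_pos v, h])
  have hp := isPendantPath_armVertex (ι := ι) v.arm
  rw [← armVertex_pos v] at hu
  rcases Nat.eq_zero_or_pos v.pos with h0 | h0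
  · rw [h0] at hu hlt
    have hhub : .inl v.arm.attach ∈ (graph ι).neighborSet (armVertex ι v.arm 0) :=
      adj_armVertex_zero_attach v.arm
    have := hu hhub (show armVertex ι v.arm (0 + 1) ∈ _ from hp.adj_succ hlt)
    simp [armVertex] at this
  · have hprev := hp.adj_succ (i := v.pos - 1) (by omega)
    rw [Nat.sub_add_cancel h0] at hprev
    have := hp.injOn (Set.mem_Iic.2 (by omega)) (Set.mem_Iic.2 hlt)
      (hu hprev.symm (hp.adj_succ hlt))
    omega

theorem exists_arm_iso_apply (hι : Function.Injective ι) (σ : graph ι ≃g graph ι) (a : Arm 𝔊) :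
    ∃ b : Arm 𝔊, b.label = a.label ∧ b.isHead = a.isHead ∧
      ∀ j, σ (armVertex ι a j) = armVertex ι b j := by
  have hp := isPendantPath_armVertex (ι := ι) a
  obtain ⟨b, hb⟩ := exists_eq_armVertex_length_of_subsingleton a.label a.label_ne_one
    (u := σ (armVertex ι a (a.length ι)))
    (by rw [← σ.image_neighborSet]; exact (hp.neighborSet_subsingleton (a.length_pos ι)).image σ)
  obtain ⟨hlen, hpath⟩ := hp.iso_apply_eq σ (isPendantPath_armVertex b)
    (two_lt_encard_neighborSet_armVertex_zero a) (two_lt_encard_neighborSet_armVertex_zero b) hb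
  obtain ⟨hl, hh⟩ := Arm.label_eq_and_isHead_eq_of_length_eq hι hlen
  refine ⟨b, hl.symm, hh.symm, fun j => ?_⟩
  rw [← armVertex_min_length, hpath _ (min_le_right _ _), hlen, armVertex_min_length]

theorem exists_iso_apply_inl (hι : Function.Injective ι) (σ : graph ι ≃g graph ι) (g : 𝔊) :
    ∃ h, σ (.inl g) = .inl h := by
  rcases hσ : σ (.inl g) with h | v
  · exact ⟨h, rfl⟩
  · obtain ⟨b, -, -, hb⟩ := exists_arm_iso_apply hι σ.symm v.arm
    have := hb v.pos
    rw [armVertex_pos, ← hσ, σ.symm_apply_apply] at this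
    simp [armVertex] at this

variable (ι) in
def translation : 𝔊 →* (graph ι ≃g graph ι) where
  toFun c := ⟨MulAction.toPerm c, graph_adj_smul c _ _⟩
  map_one' := by ext u; exact one_smul 𝔊 u
  map_mul' c d := by ext u; exact mul_smul c d u

theorem translation_apply (c : 𝔊) (u : 𝔊 ⊕ ArmVertex ι) : translation ι c u = c • u := rfl

theorem translation_injective : Function.Injective (translation ι (𝔊 := 𝔊)) := fun c d h => by
  simpa [translation_apply] using DFunLike.congr_fun h (.inl 1)

theorem translation_surjective (hι : Function.Injective ι) :
    Function.Surjective (translation ι (𝔊 := 𝔊)) := by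
  intro σ
  choose F hF using exists_iso_apply_inl hι σ
  choose α hα_label hα_isHead hα using exists_arm_iso_apply hι σ
  have attach_α (a : Arm 𝔊) : (α a).attach = F a.attach := by
    have := σ.map_adj_iff.2 (adj_armVertex_zero_attach (ι := ι) a)
    rw [hα, hF] at this
    exact this.2
  have α_mate (a : Arm 𝔊) : α a.mate = (α a).mate := by
    have := σ.map_adj_iff.2 (adj_armVertex_zero_mate (ι := ι) a)
    rw [hα, hα] at this
    exact mate_eq_of_adj_armVertex_zero this
  have F_mul (g x : 𝔊) (hx : x ≠ 1) : F (g * x) = F g * x := by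
    have htail := attach_α ⟨g, x, hx, false⟩
    have hhead := attach_α (Arm.mate ⟨g, x, hx, false⟩)
    rw [α_mate] at hhead
    simp only [Arm.attach, hα_isHead, Bool.false_eq_true, ↓reduceIte, Arm.mate, hα_label,
      Bool.not_false] at htail hhead
    rw [← hhead, htail]
  have F_eq (g : 𝔊) : F g = F 1 * g := by
    rcases eq_or_ne g 1 with rfl | hg
    · rw [mul_one]
    · rw [← F_mul 1 g hg, one_mul]
  refine ⟨F 1, RelIso.ext fun u => ?_⟩
  rcases u with g | v
  · rw [translation_apply, hF, F_eq g]
    rfl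
  · have : α v.arm = F 1 • v.arm := Arm.eq_of_attach_eq (hα_label _) (hα_isHead _)
      (by rw [attach_α, F_eq, Arm.attach_smul])
    rw [translation_apply, ← armVertex_pos v, hα, smul_armVertex, this]

end Frucht

open Frucht in
/-- Frucht's theorem: every finite group is the automorphism group of some finite
simple graph. -/
theorem frucht (𝔊 : Type*) [Group 𝔊] [Finite 𝔊] :
    ∃ (n : ℕ) (G : SimpleGraph (Fin n)), Nonempty (G.autGroup ≃* 𝔊) := by
  obtain ⟨ι, hι⟩ := Countable.exists_injective_nat 𝔊
  obtain ⟨n, ⟨e⟩⟩ := Finite.exists_equiv_fin (𝔊 ⊕ ArmVertex ι)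
  refine ⟨n, (graph ι).map e.toEmbedding, ⟨?_⟩⟩
  exact (SimpleGraph.autGroupEquiv _).trans <| (SimpleGraph.Iso.map e _).symm.autCongr.trans
    (MulEquiv.ofBijective _ ⟨translation_injective, translation_surjective hι⟩).symm
end

section
/- There exists a nut graph Q₀ of order 8 whose automorphism group has order 2, together with two vertices q₁, q₂ of Q₀ that lie in different orbits of the automorphism group and whose stabilisers in the automorphism group are both trivial. -/
open scoped Classical

/-!
The kernel of the adjacency matrix of `Q₀` is spanned by a `±1` vector, which makes `Q₀` a nut
graph. Automorphisms preserve degrees, and the two degree-6 vertices `0` and `3` are swapped by an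
involutive automorphism. An automorphism fixing `0` is the identity: one after another, each
vertex is the only one with its degree and its adjacencies to the vertices already fixed. So the
orbit of `0` is `{0, 3}` with trivial stabiliser, and orbit–stabiliser gives `|Aut Q₀| = 2`.
Take `q₁ = 0` and `q₂ = 4`, a vertex of degree 2 whose only degree-6 neighbour is `0`.
-/

namespace SimpleGraph

variable {V : Type*} {G : SimpleGraph V}

theorem mem_autGroup {σ : Equiv.Perm V} :
    σ ∈ G.autGroup ↔ ∀ u v, G.Adj (σ u) (σ v) ↔ G.Adj u v :=
  Iff.rfl

theorem degree_apply_of_mem_autGroup [G.LocallyFinite] {σ : Equiv.Perm V} (hσ : σ ∈ G.autGroup)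
    (v : V) : G.degree (σ v) = G.degree v :=
  Iso.degree_eq ⟨σ, hσ _ _⟩ v

theorem apply_eq_self_of_unique_degree_adj [G.LocallyFinite] {σ : Equiv.Perm V}
    (hσ : σ ∈ G.autGroup) {F : Finset V} (hF : ∀ f ∈ F, σ f = f) {u : V}
    (hu : ∀ w, G.degree w = G.degree u → (∀ f ∈ F, G.Adj w f ↔ G.Adj u f) → w = u) :
    σ u = u := by
  refine hu (σ u) (degree_apply_of_mem_autGroup hσ u) fun f hf => ?_
  have := hσ u f
  rwa [hF f hf] at this

theorem isNut_of_ker_eq_span_singleton [Fintype V] [DecidableRel G.Adj]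
    (hV : 2 ≤ Fintype.card V) {k : V → ℝ} (hk : ∀ v, k v ≠ 0)
    (hker : LinearMap.ker (G.adjMatrix ℝ).mulVecLin = ℝ ∙ k) : G.IsNut := by
  -- `IsNut` is stated with the classical decidability instance.
  obtain rfl : ‹DecidableRel G.Adj› = fun u v => Classical.propDecidable (G.Adj u v) :=
    Subsingleton.elim _ _
  have : Nonempty V := Fintype.card_pos_iff.1 (by omega)
  refine ⟨hV, ?_, fun x hx hx0 v => ?_⟩
  · rw [hker, finrank_span_singleton]
    exact fun h => hk (Classical.arbitrary V) (congrFun h _)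
  · have hx : x ∈ ℝ ∙ k := hker ▸ LinearMap.mem_ker.2 hx
    obtain ⟨c, rfl⟩ := Submodule.mem_span_singleton.1 hx
    have hc : c ≠ 0 := by rintro rfl; exact hx0 (zero_smul ℝ k)
    exact mul_ne_zero hc (hk v)

end SimpleGraph

def gadgetEdges : Finset (Sym2 (Fin 8)) :=
  {s(0, 1), s(0, 2), s(0, 3), s(0, 4), s(0, 5), s(0, 7), s(1, 3), s(1, 5),
    s(1, 6), s(2, 3), s(2, 5), s(2, 7), s(3, 5), s(3, 6), s(3, 7), s(4, 7)}

def gadget : SimpleGraph (Fin 8) := SimpleGraph.fromEdgeSet gadgetEdges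

instance : DecidableRel gadget.Adj :=
  inferInstanceAs (DecidableRel (SimpleGraph.fromEdgeSet (gadgetEdges : Set (Sym2 (Fin 8)))).Adj)

open Matrix in
theorem gadget_adjMatrix_mulVec (x : Fin 8 → ℝ) :
    gadget.adjMatrix ℝ *ᵥ x = ![x 1 + x 2 + x 3 + x 4 + x 5 + x 7, x 0 + x 3 + x 5 + x 6,
      x 0 + x 3 + x 5 + x 7, x 0 + x 1 + x 2 + x 5 + x 6 + x 7, x 0 + x 7, x 0 + x 1 + x 2 + x 3,
      x 1 + x 3, x 0 + x 2 + x 3 + x 4] := by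
  ext v
  fin_cases v <;> simp +decide [mulVec, dotProduct, Fin.sum_univ_eight, SimpleGraph.adjMatrix_apply]

def gadgetNullVec : Fin 8 → ℝ := ![1, 1, -1, -1, 1, 1, -1, -1]

theorem gadgetNullVec_ne_zero (v : Fin 8) : gadgetNullVec v ≠ 0 := by
  fin_cases v <;> norm_num [gadgetNullVec]

theorem gadget_ker : LinearMap.ker (gadget.adjMatrix ℝ).mulVecLin = ℝ ∙ gadgetNullVec := by
  refine le_antisymm (fun x hx => ?_) ?_
  · rw [LinearMap.mem_ker, Matrix.mulVecLin_apply, gadget_adjMatrix_mulVec] at hx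
    have hx := congrFun hx
    simp only [Fin.isValue, Pi.zero_apply, Fin.forall_fin_succ, Matrix.cons_val_zero,
      Matrix.cons_val_succ, Matrix.cons_val_fin_one, forall_const] at hx
    refine Submodule.mem_span_singleton.2 ⟨x 0, ?_⟩
    ext v
    fin_cases v <;> simp [gadgetNullVec] <;> linarith
  · rw [Submodule.span_singleton_le_iff_mem, LinearMap.mem_ker, Matrix.mulVecLin_apply,
      gadget_adjMatrix_mulVec]
    ext v
    fin_cases v <;> simp [gadgetNullVec]

open MulAction

def gadgetSwap : Equiv.Perm (Fin 8) :=
  Equiv.swap 0 3 * Equiv.swap 4 6 * Equiv.swap 1 7 * Equiv.swap 2 5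

theorem gadgetSwap_mem_autGroup : gadgetSwap ∈ gadget.autGroup :=
  SimpleGraph.mem_autGroup.2 (by decide)

theorem gadget_eq_one_of_apply_zero {σ : Equiv.Perm (Fin 8)} (hσ : σ ∈ gadget.autGroup)
    (h0 : σ 0 = 0) : σ = 1 := by
  have pin := @SimpleGraph.apply_eq_self_of_unique_degree_adj _ _ _ σ hσ
  have h3 := pin (F := {0}) (by simp [h0]) (u := 3) (by decide)
  have h4 := pin (F := {0}) (by simp [h0]) (u := 4) (by decide)
  have h6 := pin (F := {0}) (by simp [h0]) (u := 6) (by decide)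
  have h1 := pin (F := {0, 3, 4, 6}) (by simp [*]) (u := 1) (by decide)
  have h7 := pin (F := {0, 3, 4, 6}) (by simp [*]) (u := 7) (by decide)
  have h2 := pin (F := {7}) (by simp [*]) (u := 2) (by decide)
  have h5 := pin (F := {1}) (by simp [*]) (u := 5) (by decide)
  exact Equiv.ext fun v => by fin_cases v <;> assumption

theorem gadget_stabilizer_zero : stabilizer gadget.autGroup (0 : Fin 8) = ⊥ :=
  (Subgroup.eq_bot_iff_forall _).2 fun σ hσ => Subtype.ext (gadget_eq_one_of_apply_zero σ.2 hσ)

theorem gadget_stabilizer_four : stabilizer gadget.autGroup (4 : Fin 8) = ⊥ := by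
  refine (Subgroup.eq_bot_iff_forall _).2 fun σ hσ => Subtype.ext ?_
  refine gadget_eq_one_of_apply_zero σ.2 ?_
  exact SimpleGraph.apply_eq_self_of_unique_degree_adj σ.2 (F := {4})
    (fun f hf => (Finset.mem_singleton.1 hf) ▸ hσ) (by decide)

theorem gadget_orbit_zero : orbit gadget.autGroup (0 : Fin 8) = {0, 3} := by
  ext v
  constructor
  · rintro ⟨σ, rfl⟩
    have hdeg : ∀ w : Fin 8, gadget.degree w = gadget.degree 0 → w = 0 ∨ w = 3 := by decide
    exact hdeg _ (SimpleGraph.degree_apply_of_mem_autGroup σ.2 0)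
  · rintro (rfl | rfl)
    · exact mem_orbit_self _
    · exact ⟨⟨gadgetSwap, gadgetSwap_mem_autGroup⟩, rfl⟩

theorem gadget_card_autGroup : Nat.card gadget.autGroup = 2 := by
  rw [← Subgroup.index_bot, ← gadget_stabilizer_zero, index_stabilizer, gadget_orbit_zero,
    Set.ncard_pair (by decide)]

/-- There exists a nut graph `Q₀` of order 8 whose automorphism group has order 2,
with two vertices `q₁`, `q₂` lying in different orbits of the automorphism group and
both having trivial stabiliser. -/
theorem exists_gadget_nut_graph :
    ∃ G : SimpleGraph (Fin 8), G.IsNut ∧ Nat.card G.autGroup = 2 ∧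
      ∃ q₁ q₂ : Fin 8,
        q₂ ∉ MulAction.orbit G.autGroup q₁ ∧
        MulAction.stabilizer G.autGroup q₁ = ⊥ ∧
        MulAction.stabilizer G.autGroup q₂ = ⊥ :=
  ⟨gadget, SimpleGraph.isNut_of_ker_eq_span_singleton (by simp) gadgetNullVec_ne_zero gadget_ker,
    gadget_card_autGroup, 0, 4, by rw [gadget_orbit_zero]; decide, gadget_stabilizer_zero,
    gadget_stabilizer_four⟩
end
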